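/- Let f : ℝ^d → ℝ be L-smooth. For β > 0, 1 ≤ ℓ ≤ d, and an orthogonal matrix G ∈ O(d), define ĝ(x, G, β) := (d/ℓ) ∑_{j=1}^ℓ (f(x + β G e_j) − f(x))/β · G e_j. Then for any fixed x, y ∈ ℝ^d, taking expectation over G distributed according to the normalized Haar measure on O(d): E_G[‖ĝ(x, G, β) − ĝ(y, G, β)‖²] ≤ (3d/ℓ)‖∇f(x) − ∇f(y)‖² + (3 L² d² / (2ℓ)) β². -/

import Mathlib

open MeasureTheory

noncomputable instance {d : ℕ} : MeasurableSpace (Matrix (Fin d) (Fin d) ℝ) :=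
  inferInstanceAs (MeasurableSpace (Fin d → Fin d → ℝ))

/-- Action of a `d × d` matrix on a vector of `EuclideanSpace ℝ (Fin d)`. -/
noncomputable def matAct {d : ℕ} (A : Matrix (Fin d) (Fin d) ℝ)
    (x : EuclideanSpace ℝ (Fin d)) : EuclideanSpace ℝ (Fin d) :=
  (WithLp.equiv 2 (Fin d → ℝ)).symm (A.mulVec ((WithLp.equiv 2 (Fin d → ℝ)) x))

/-- The structured `ℓ`-direction forward finite-difference gradient estimator
`ĝ(x, G, β) = (d/ℓ) ∑_{j=1}^ℓ (f(x + β G e_j) − f(x))/β · G e_j`. -/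
noncomputable def structGrad {d l : ℕ} (hld : l ≤ d)
    (f : EuclideanSpace ℝ (Fin d) → ℝ) (β : ℝ)
    (x : EuclideanSpace ℝ (Fin d)) (G : Matrix (Fin d) (Fin d) ℝ) :
    EuclideanSpace ℝ (Fin d) :=
  ((d : ℝ) / l) • ∑ j : Fin l,
    ((f (x + β • matAct G (EuclideanSpace.single (Fin.castLE hld j) (1 : ℝ))) - f x) / β) •
      matAct G (EuclideanSpace.single (Fin.castLE hld j) (1 : ℝ))

open Matrix Finset
open scoped RealInnerProductSpace

/-!
For orthogonal `G` the directions `G e_j` are orthonormal, so `‖ĝ(x) - ĝ(y)‖²` is `(d/ℓ)²` times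
the sum over `j` of the squared differences of the two forward difference quotients along `G e_j`.
By the descent lemma each quotient is `⟪∇f, G e_j⟫` up to an error of at most `Lβ/2`, which bounds
that square by `3⟪∇f x - ∇f y, G e_j⟫² + (3/2) L² β²`. Left invariance of the measure under sign
changes and permutations of the coordinates forces the second moments `E[G_ij G_kj] = δ_ik / d`,
hence `E⟪g, G e_j⟫² = ‖g‖² / d`; summing over the `ℓ` directions gives the bound.
-/

section Smooth

variable {E : Type*} [NormedAddCommGroup E] [InnerProductSpace ℝ E] [CompleteSpace E]
  {f : E → ℝ} {L : ℝ}

theorem abs_sub_sub_inner_gradient_le (hf : Differentiable ℝ f)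
    (hL : ∀ x y, ‖gradient f x - gradient f y‖ ≤ L * ‖x - y‖) (z u : E) :
    |f (z + u) - f z - ⟪gradient f z, u⟫| ≤ L / 2 * ‖u‖ ^ 2 := by
  have hφ : ∀ t : ℝ, HasDerivAt (fun t => f (z + t • u) - f z - t * ⟪gradient f z, u⟫)
      ⟪gradient f (z + t • u) - gradient f z, u⟫ t := by
    intro t
    have hline : HasDerivAt (fun t : ℝ => z + t • u) u t := by
      simpa using ((hasDerivAt_id t).smul_const u).const_add z
    have hcomp : HasDerivAt (fun t => f (z + t • u)) ⟪gradient f (z + t • u), u⟫ t :=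
      (hf _).hasGradientAt.hasFDerivAt.comp_hasDerivAt t hline
    rw [inner_sub_left]
    exact ((hcomp.sub_const (f z)).sub ((hasDerivAt_id t).mul_const _)).congr_deriv (by simp)
  have hB : ∀ t : ℝ, HasDerivAt (fun t => L / 2 * ‖u‖ ^ 2 * t ^ 2) (L * ‖u‖ ^ 2 * t) t := fun t =>
    ((hasDerivAt_pow 2 t).const_mul (L / 2 * ‖u‖ ^ 2)).congr_deriv (by ring)
  have hbound : ∀ t ∈ Set.Ico (0 : ℝ) 1,
      ‖⟪gradient f (z + t • u) - gradient f z, u⟫‖ ≤ L * ‖u‖ ^ 2 * t := by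
    intro t ht
    calc ‖⟪gradient f (z + t • u) - gradient f z, u⟫‖
        ≤ ‖gradient f (z + t • u) - gradient f z‖ * ‖u‖ := norm_inner_le_norm _ _
      _ ≤ L * ‖(z + t • u) - z‖ * ‖u‖ := by gcongr; exact hL _ _
      _ = L * ‖u‖ ^ 2 * t := by
        rw [add_sub_cancel_left, norm_smul, Real.norm_of_nonneg ht.1]
        ring
  have := image_norm_le_of_norm_deriv_right_le_deriv_boundary
    (fun t _ => (hφ t).continuousAt.continuousWithinAt) (fun t _ => (hφ t).hasDerivWithinAt)
    (by simp) hB hbound (Set.right_mem_Icc.2 zero_le_one)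
  simpa using this

theorem abs_slope_sub_inner_gradient_le (hf : Differentiable ℝ f)
    (hL : ∀ x y, ‖gradient f x - gradient f y‖ ≤ L * ‖x - y‖) (x : E) {v : E} (hv : ‖v‖ = 1)
    {β : ℝ} (hβ : 0 < β) :
    |(f (x + β • v) - f x) / β - ⟪gradient f x, v⟫| ≤ L / 2 * β := by
  have h := abs_sub_sub_inner_gradient_le hf hL x (β • v)
  rw [norm_smul, hv, Real.norm_of_nonneg hβ.le, real_inner_smul_right] at h
  rw [show (f (x + β • v) - f x) / β - ⟪gradient f x, v⟫
      = (f (x + β • v) - f x - β * ⟪gradient f x, v⟫) / β by field_simp,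
    abs_div, abs_of_pos hβ, div_le_iff₀ hβ]
  linarith

theorem sq_slope_sub_slope_le (hf : Differentiable ℝ f)
    (hL : ∀ x y, ‖gradient f x - gradient f y‖ ≤ L * ‖x - y‖) (x y : E) {v : E} (hv : ‖v‖ = 1)
    {β : ℝ} (hβ : 0 < β) :
    ((f (x + β • v) - f x) / β - (f (y + β • v) - f y) / β) ^ 2
      ≤ 3 * ⟪gradient f x - gradient f y, v⟫ ^ 2 + 3 / 2 * L ^ 2 * β ^ 2 := by
  set a := (f (x + β • v) - f x) / β - ⟪gradient f x, v⟫
  set b := (f (y + β • v) - f y) / β - ⟪gradient f y, v⟫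
  set p := ⟪gradient f x - gradient f y, v⟫
  have ha : a ^ 2 ≤ (L / 2 * β) ^ 2 :=
    sq_le_sq.2 ((abs_slope_sub_inner_gradient_le hf hL x hv hβ).trans (le_abs_self _))
  have hb : b ^ 2 ≤ (L / 2 * β) ^ 2 :=
    sq_le_sq.2 ((abs_slope_sub_inner_gradient_le hf hL y hv hβ).trans (le_abs_self _))
  have hsplit : (f (x + β • v) - f x) / β - (f (y + β • v) - f y) / β = p + a - b := by
    simp only [a, b, p, inner_sub_left]
    ring
  rw [hsplit]
  -- `(p + a - b)² ≤ 3 (p² + a² + b²)`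
  nlinarith [sq_nonneg (p - a), sq_nonneg (p + b), sq_nonneg (a + b)]

end Smooth

theorem Orthonormal.norm_sum_smul_sq {E ι : Type*} [NormedAddCommGroup E]
    [InnerProductSpace ℝ E] {v : ι → E} (hv : Orthonormal ℝ v) (c : ι → ℝ) (s : Finset ι) :
    ‖∑ i ∈ s, c i • v i‖ ^ 2 = ∑ i ∈ s, c i ^ 2 := by
  rw [← real_inner_self_eq_norm_sq, hv.inner_sum]
  simp [sq]

section OrthogonalMatrices

variable {n R : Type*} [Fintype n] [DecidableEq n] [CommRing R]

theorem Equiv.Perm.permMatrix_mem_orthogonalGroup (σ : Equiv.Perm n) :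
    σ.permMatrix R ∈ orthogonalGroup n R := by
  rw [mem_orthogonalGroup_iff', transpose_permMatrix, ← permMatrix_mul, mul_inv_cancel,
    permMatrix_one]

theorem Matrix.diagonal_mem_orthogonalGroup {s : n → R} (hs : ∀ i, s i * s i = 1) :
    diagonal s ∈ orthogonalGroup n R := by
  rw [mem_orthogonalGroup_iff', diagonal_transpose, diagonal_mul_diagonal, ← diagonal_one]
  exact congrArg diagonal (funext hs)

theorem Matrix.sum_mul_of_mem_orthogonalGroup {G : Matrix n n R} (hG : G ∈ orthogonalGroup n R)
    (j k : n) : ∑ i, G i j * G i k = if j = k then 1 else 0 := by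
  simpa [Matrix.mul_apply, one_apply] using congr_fun₂ ((mem_orthogonalGroup_iff' _ _).1 hG) j k

end OrthogonalMatrices

section MatAct

variable {d : ℕ}

theorem matAct_single_apply (G : Matrix (Fin d) (Fin d) ℝ) (j i : Fin d) :
    matAct G (EuclideanSpace.single j 1) i = G i j := by
  simp [matAct]

theorem inner_matAct_single (G : Matrix (Fin d) (Fin d) ℝ) (g : EuclideanSpace ℝ (Fin d))
    (j : Fin d) : ⟪g, matAct G (EuclideanSpace.single j 1)⟫ = ∑ i, g i * G i j := by
  simp [PiLp.inner_apply, matAct_single_apply, mul_comm]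

theorem inner_matAct_single_sq (G : Matrix (Fin d) (Fin d) ℝ) (g : EuclideanSpace ℝ (Fin d))
    (j : Fin d) :
    ⟪g, matAct G (EuclideanSpace.single j 1)⟫ ^ 2 = ∑ i, ∑ k, g i * g k * (G i j * G k j) := by
  rw [inner_matAct_single, sq, sum_mul_sum]
  simp only [mul_mul_mul_comm]

theorem orthonormal_matAct_single {G : Matrix (Fin d) (Fin d) ℝ}
    (hG : G ∈ orthogonalGroup (Fin d) ℝ) :
    Orthonormal ℝ fun j => matAct G (EuclideanSpace.single j 1) := by
  rw [orthonormal_iff_ite]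
  intro j k
  simp only [inner_matAct_single, matAct_single_apply, sum_mul_of_mem_orthogonalGroup hG]

theorem norm_structGrad_sub_sq_le {l : ℕ} (hld : l ≤ d) {f : EuclideanSpace ℝ (Fin d) → ℝ}
    {L β : ℝ} (hβ : 0 < β) (hf : Differentiable ℝ f)
    (hL : ∀ x y, ‖gradient f x - gradient f y‖ ≤ L * ‖x - y‖) (x y : EuclideanSpace ℝ (Fin d))
    {G : Matrix (Fin d) (Fin d) ℝ} (hG : G ∈ orthogonalGroup (Fin d) ℝ) :
    ‖structGrad hld f β x G - structGrad hld f β y G‖ ^ 2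
      ≤ ((d : ℝ) / l) ^ 2 * ∑ j : Fin l,
        (3 * ⟪gradient f x - gradient f y,
          matAct G (EuclideanSpace.single (Fin.castLE hld j) 1)⟫ ^ 2 + 3 / 2 * L ^ 2 * β ^ 2) := by
  have hv : Orthonormal ℝ fun j : Fin l => matAct G (EuclideanSpace.single (Fin.castLE hld j) 1) :=
    (orthonormal_matAct_single hG).comp _ (Fin.castLE_injective hld)
  rw [structGrad, structGrad, ← smul_sub, ← sum_sub_distrib]
  simp_rw [← sub_smul]
  rw [norm_smul, mul_pow, Real.norm_eq_abs, sq_abs, hv.norm_sum_smul_sq]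
  gcongr with j
  exact sq_slope_sub_slope_le hf hL x y (hv.norm_eq_one j) hβ

end MatAct

section HaarMoments

-- This makes left multiplication on `orthogonalGroup` measurable.
instance {d : ℕ} : BorelSpace (Matrix (Fin d) (Fin d) ℝ) :=
  inferInstanceAs (BorelSpace (Fin d → Fin d → ℝ))

variable {d : ℕ} {μ : Measure (orthogonalGroup (Fin d) ℝ)}

theorem integrable_entry_mul_entry [IsFiniteMeasure μ] (i k j : Fin d) :
    Integrable (fun G => G i j * G k j) μ := by
  have hcont : ∀ a, Continuous fun G : orthogonalGroup (Fin d) ℝ => G a j := fun a =>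
    (continuous_apply j).comp ((continuous_apply a).comp continuous_subtype_val)
  refine Integrable.of_bound ((hcont i).mul (hcont k)).aestronglyMeasurable 1
    (ae_of_all _ fun G => ?_)
  rw [norm_mul]
  exact mul_le_one₀ (entry_norm_bound_of_unitary G.2 i j) (norm_nonneg _)
    (entry_norm_bound_of_unitary G.2 k j)

theorem integral_entry_mul_entry_of_ne [μ.IsMulLeftInvariant] {i k : Fin d} (hik : i ≠ k)
    (j : Fin d) : ∫ G, G i j * G k j ∂μ = 0 := by
  let s : Fin d → ℝ := fun a => if a = i then -1 else 1
  let h : orthogonalGroup (Fin d) ℝ :=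
    ⟨diagonal s, diagonal_mem_orthogonalGroup fun a => by by_cases ha : a = i <;> simp [s, ha]⟩
  have hflip : ∀ G : orthogonalGroup (Fin d) ℝ, (h * G) i j * (h * G) k j = -(G i j * G k j) := by
    intro G
    simp [h, s, diagonal_mul, hik.symm]
  have := integral_mul_left_eq_self (μ := μ) (fun G => G i j * G k j) h
  simp only [hflip, integral_neg] at this
  linarith

theorem integral_entry_mul_self [IsProbabilityMeasure μ] [μ.IsMulLeftInvariant] (i j : Fin d) :
    ∫ G, G i j * G i j ∂μ = (d : ℝ)⁻¹ := by
  have hswap : ∀ k, ∫ G, G k j * G k j ∂μ = ∫ G, G i j * G i j ∂μ := by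
    intro k
    let h : orthogonalGroup (Fin d) ℝ :=
      ⟨(Equiv.swap k i).permMatrix ℝ, (Equiv.swap k i).permMatrix_mem_orthogonalGroup⟩
    rw [← integral_mul_left_eq_self (μ := μ) (fun G => G k j * G k j) h]
    simp [h, PEquiv.toMatrix_toPEquiv_mul]
  have hsum : ∑ k, ∫ G, G k j * G k j ∂μ = 1 := by
    rw [← integral_finsetSum _ fun k _ => integrable_entry_mul_entry k k j]
    simp [sum_mul_of_mem_orthogonalGroup (Subtype.prop _)]
  simp only [hswap, sum_const, card_univ, Fintype.card_fin, nsmul_eq_mul] at hsum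
  exact eq_inv_of_mul_eq_one_right hsum

theorem integral_entry_mul_entry [IsProbabilityMeasure μ] [μ.IsMulLeftInvariant] (i k j : Fin d) :
    ∫ G, G i j * G k j ∂μ = if i = k then (d : ℝ)⁻¹ else 0 := by
  split_ifs with hik
  · rw [hik, integral_entry_mul_self]
  · exact integral_entry_mul_entry_of_ne hik j

theorem integrable_inner_matAct_single_sq [IsFiniteMeasure μ] (g : EuclideanSpace ℝ (Fin d))
    (j : Fin d) :
    Integrable (fun G : orthogonalGroup (Fin d) ℝ =>
      ⟪g, matAct G (EuclideanSpace.single j 1)⟫ ^ 2) μ := by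
  simp_rw [inner_matAct_single_sq]
  exact integrable_finsetSum _ fun i _ => integrable_finsetSum _ fun k _ =>
    (integrable_entry_mul_entry i k j).const_mul _

theorem integral_inner_matAct_single_sq [IsProbabilityMeasure μ] [μ.IsMulLeftInvariant]
    (g : EuclideanSpace ℝ (Fin d)) (j : Fin d) :
    ∫ G, ⟪g, matAct G (EuclideanSpace.single j 1)⟫ ^ 2 ∂μ = ‖g‖ ^ 2 / d := by
  simp_rw [inner_matAct_single_sq]
  rw [integral_finsetSum _ fun i _ => integrable_finsetSum _ fun k _ =>
    (integrable_entry_mul_entry i k j).const_mul _]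
  simp_rw [integral_finsetSum _ fun k _ => (integrable_entry_mul_entry _ k j).const_mul _,
    integral_const_mul, integral_entry_mul_entry, EuclideanSpace.norm_sq_eq]
  simp [div_eq_mul_inv, sq, sum_mul]

end HaarMoments

theorem structGrad_diff_bound (d l : ℕ) (hl : 1 ≤ l) (hld : l ≤ d)
    (μ : Measure (Matrix.orthogonalGroup (Fin d) ℝ)) [IsProbabilityMeasure μ]
    (hμinv : ∀ g : Matrix.orthogonalGroup (Fin d) ℝ,
      Measure.map (fun x => g * x) μ = μ)
    (f : EuclideanSpace ℝ (Fin d) → ℝ) (L β : ℝ) (hβ : 0 < β)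
    (hdiff : Differentiable ℝ f)
    (hL : ∀ x y, ‖gradient f x - gradient f y‖ ≤ L * ‖x - y‖)
    (x y : EuclideanSpace ℝ (Fin d)) :
    ∫ G, ‖structGrad hld f β x (G : Matrix (Fin d) (Fin d) ℝ)
        - structGrad hld f β y (G : Matrix (Fin d) (Fin d) ℝ)‖ ^ 2 ∂μ
      ≤ 3 * d / l * ‖gradient f x - gradient f y‖ ^ 2
        + 3 * L ^ 2 * d ^ 2 / (2 * l) * β ^ 2 := by
  have : μ.IsMulLeftInvariant := ⟨hμinv⟩
  set g := gradient f x - gradient f y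
  set c := 3 / 2 * L ^ 2 * β ^ 2
  have hint : ∀ j : Fin l, Integrable (fun G : orthogonalGroup (Fin d) ℝ =>
      3 * ⟪g, matAct G (EuclideanSpace.single (Fin.castLE hld j) 1)⟫ ^ 2 + c) μ := fun j =>
    ((integrable_inner_matAct_single_sq g _).const_mul 3).add (integrable_const c)
  calc _ ≤ ∫ G : orthogonalGroup (Fin d) ℝ, ((d : ℝ) / l) ^ 2 * ∑ j : Fin l,
        (3 * ⟪g, matAct G (EuclideanSpace.single (Fin.castLE hld j) 1)⟫ ^ 2 + c) ∂μ :=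
      integral_mono_of_nonneg (ae_of_all _ fun _ => by positivity)
        ((integrable_finsetSum _ fun j _ => hint j).const_mul _)
        (ae_of_all _ fun G => norm_structGrad_sub_sq_le hld hβ hdiff hL x y G.2)
    _ = ((d : ℝ) / l) ^ 2 * ∑ j : Fin l, (3 * (‖g‖ ^ 2 / d) + c) := by
      rw [integral_const_mul, integral_finsetSum _ fun j _ => hint j]
      simp_rw [integral_add ((integrable_inner_matAct_single_sq g _).const_mul 3)
        (integrable_const c), integral_const_mul, integral_inner_matAct_single_sq]
      simp
    _ = 3 * d / l * ‖g‖ ^ 2 + 3 * L ^ 2 * d ^ 2 / (2 * l) * β ^ 2 := by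
      have hl0 : (l : ℝ) ≠ 0 := by norm_cast; omega
      have hd0 : (d : ℝ) ≠ 0 := by norm_cast; omega
      rw [sum_const, card_univ, Fintype.card_fin, nsmul_eq_mul]
      field_simp
      ring
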